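/- Let p be a prime and R a perfect 𝔽_p-algebra, equipped with the trivial norm. Let α be a multiplicative seminorm on R bounded above by the trivial norm. Define λ(α) : W(R) → ℝ≥0 by λ(α)(x) = sup_i p^{−i} α(x_i), where x = ∑_{i≥0} p^i [x_i] is the Teichmüller expansion of x (equivalently, x_i is the unique p^i-th root in R of the i-th Witt coordinate of x). Then λ(α) is a multiplicative seminorm on W(R) bounded above by the normalized p-adic norm. -/

import Mathlib

open scoped NNReal

/-- A multiplicative (nonarchimedean) seminorm on a commutative ring. -/
def IsMultSeminorm {A : Type*} [CommRing A] (α : A → ℝ≥0) : Prop :=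
  α 0 = 0 ∧ (∀ g h : A, α (g - h) ≤ max (α g) (α h)) ∧
    α 1 = 1 ∧ ∀ g h : A, α (g * h) = α g * α h

/-- The trivial norm on a ring: `0 ↦ 0` and every nonzero element to `1`. -/
noncomputable def trivialNorm {A : Type*} [CommRing A] (a : A) : ℝ≥0 :=
  open scoped Classical in
  if a = 0 then 0 else 1

/-- For `R` a perfect `𝔽_p`-algebra and `x ∈ W(R)` with Teichmüller expansion
`x = ∑_{i≥0} p^i [x_i]`, this is `x_i`: the unique `p^i`-th root in `R` of the
`i`-th Witt coordinate of `x`. -/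
noncomputable def teichCoeff (p : ℕ) [Fact p.Prime] {R : Type*} [CommRing R]
    [ExpChar R p] [PerfectRing R p] (x : WittVector p R) (i : ℕ) : R :=
  (⇑(frobeniusEquiv R p).symm)^[i] (x.coeff i)

/-- The normalized `p`-adic norm on `W(R)`: it sends `0` to `0` and a nonzero
`x = ∑ p^i [x_i]` to `p^{-j}`, where `j` is the least index with `x_j ≠ 0`. -/
noncomputable def padicNormWitt (p : ℕ) [Fact p.Prime] {R : Type*} [CommRing R]
    [ExpChar R p] [PerfectRing R p] (x : WittVector p R) : ℝ≥0 :=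
  ⨆ i : ℕ, (p : ℝ≥0)⁻¹ ^ i * trivialNorm (teichCoeff p x i)

/-- The Gauss-type extension `λ(α)` of a seminorm `α` on `R` to `W(R)`:
`λ(α)(∑ p^i [x_i]) = sup_i p^{-i} α(x_i)`. -/
noncomputable def lambdaSeminorm (p : ℕ) [Fact p.Prime] {R : Type*} [CommRing R]
    [ExpChar R p] [PerfectRing R p] (α : R → ℝ≥0) (x : WittVector p R) : ℝ≥0 :=
  ⨆ i : ℕ, (p : ℝ≥0)⁻¹ ^ i * α (teichCoeff p x i)

/-!
Write `x = [x₀] + r p`. Reading off Teichmüller coefficients gives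
`λ(x) = max (α x₀) (p⁻¹ λ(r))`, and with it `λ([a] y) = α(a) λ(y)` and `λ(x p) = p⁻¹ λ(x)`.

The ultrametric inequality comes from weighted homogeneity: the `n`-th Witt coordinate of `x - y`
is `wittSub p n` evaluated at the Witt coordinates, and `wittSub p n` is weighted homogeneous of
degree `p ^ n` when `X (b, i)` has weight `p ^ i`. Taking `p ^ n`-th roots, every monomial of the
`n`-th Teichmüller coefficient of `x - y` is bounded by `p ^ n max (λ x) (λ y)`.

Both halves of multiplicativity are proved up to an error `p ^ (-N)`, by induction on `N` through
`x = [x₀] + r p`; the error is harmless because `λ ≤ 1`. For `λ(xy) ≥ λ(x) λ(y)` this is Gauss's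
argument: if `α(x₀) < λ(x)`, then `λ(x) = p⁻¹ λ(r)` and the term `[x₀] y` of `xy = [x₀] y + r y p`
is strictly dominated, so `λ(xy) ≥ p⁻¹ λ(r y)`.
-/

open MvPolynomial

section Ultrametric

variable {A : Type*} [AddCommGroup A] {f : A → ℝ≥0}
  (h0 : f 0 = 0) (hsub : ∀ g h : A, f (g - h) ≤ max (f g) (f h))
include h0 hsub

lemma apply_neg_of_sub_le_max (g : A) : f (-g) = f g := by
  refine le_antisymm ?_ ?_
  · simpa [h0] using hsub 0 g
  · simpa [h0] using hsub 0 (-g)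

lemma apply_add_le_max_of_sub_le_max (g h : A) : f (g + h) ≤ max (f g) (f h) := by
  simpa [apply_neg_of_sub_le_max h0 hsub] using hsub g (-h)

end Ultrametric

namespace IsMultSeminorm

variable {A : Type*} [CommRing A] {α : A → ℝ≥0} (hα : IsMultSeminorm α)
include hα

def toMonoidWithZeroHom : A →*₀ ℝ≥0 where
  toFun := α
  map_zero' := hα.1
  map_one' := hα.2.2.1
  map_mul' := hα.2.2.2

lemma map_add_le (g h : A) : α (g + h) ≤ max (α g) (α h) :=
  apply_add_le_max_of_sub_le_max hα.1 hα.2.1 g h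

lemma map_pow (a : A) (n : ℕ) : α (a ^ n) = α a ^ n :=
  _root_.map_pow hα.toMonoidWithZeroHom a n

lemma map_prod {ι : Type*} (s : Finset ι) (g : ι → A) : α (∏ i ∈ s, g i) = ∏ i ∈ s, α (g i) :=
  _root_.map_prod hα.toMonoidWithZeroHom g s

lemma map_intCast_le_one (k : ℤ) : α k ≤ 1 := by
  have hnat : ∀ n : ℕ, α n ≤ 1 := fun n => by
    induction n with
    | zero => simp [hα.1]
    | succ n ih => simpa [hα.2.2.1, ih] using hα.map_add_le n 1
  obtain ⟨n, rfl | rfl⟩ := Int.eq_nat_or_neg k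
  · exact_mod_cast hnat n
  · simpa [apply_neg_of_sub_le_max hα.1 hα.2.1] using hnat n

lemma map_sum_le {ι : Type*} (s : Finset ι) (g : ι → A) {M : ℝ≥0}
    (h : ∀ i ∈ s, α (g i) ≤ M) : α (∑ i ∈ s, g i) ≤ M :=
  Finset.sum_induction g (α · ≤ M) (fun _ _ ha hb => (hα.map_add_le _ _).trans (max_le ha hb))
    (by simp [hα.1]) h

lemma map_prod_pow_le {σ : Type*} {p n : ℕ} (hp : 0 < p) {l : σ → ℕ} {d : σ →₀ ℕ}
    (hd : Finsupp.weight (fun s => p ^ l s) d = p ^ n) (hl : ∀ s ∈ d.support, l s ≤ n)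
    {u : σ → A} {M : ℝ≥0}
    (hu : ∀ s ∈ d.support, α (u s) ^ p ^ n ≤ ((p : ℝ≥0) ^ l s * M) ^ p ^ l s) :
    α (∏ s ∈ d.support, u s ^ d s) ≤ (p : ℝ≥0) ^ n * M := by
  have hd' : ∑ s ∈ d.support, d s * p ^ l s = p ^ n := by
    simpa [Finsupp.weight_apply, Finsupp.sum] using hd
  rw [hα.map_prod, ← pow_le_pow_iff_left₀ zero_le zero_le (pow_pos hp n).ne', ← Finset.prod_pow]
  calc ∏ s ∈ d.support, α (u s ^ d s) ^ p ^ n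
      = ∏ s ∈ d.support, (α (u s) ^ p ^ n) ^ d s := by
        refine Finset.prod_congr rfl fun s _ => ?_
        rw [hα.map_pow, ← pow_mul, ← pow_mul, mul_comm]
    _ ≤ ∏ s ∈ d.support, (((p : ℝ≥0) ^ l s * M) ^ p ^ l s) ^ d s :=
        Finset.prod_le_prod' fun s hs => pow_le_pow_left' (hu s hs) _
    _ = (p : ℝ≥0) ^ (∑ s ∈ d.support, l s * (d s * p ^ l s)) * M ^ p ^ n := by
        rw [← hd', ← Finset.prod_pow_eq_pow_sum, ← Finset.prod_pow_eq_pow_sum,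
          ← Finset.prod_mul_distrib]
        refine Finset.prod_congr rfl fun s _ => ?_
        rw [mul_pow, mul_pow, ← pow_mul, ← pow_mul, ← pow_mul, mul_comm (p ^ l s)]
    _ ≤ (p : ℝ≥0) ^ (n * p ^ n) * M ^ p ^ n := by
        refine mul_le_mul_of_nonneg_right (pow_le_pow_right₀ (by exact_mod_cast hp) ?_) zero_le
        calc ∑ s ∈ d.support, l s * (d s * p ^ l s)
            ≤ ∑ s ∈ d.support, n * (d s * p ^ l s) :=
              Finset.sum_le_sum fun s hs => Nat.mul_le_mul_right _ (hl s hs)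
          _ = n * p ^ n := by rw [← Finset.mul_sum, hd']
    _ = ((p : ℝ≥0) ^ n * M) ^ p ^ n := by rw [mul_pow, ← pow_mul]

lemma map_aeval_le {σ : Type*} {p n : ℕ} (hp : 0 < p) {l : σ → ℕ} {P : MvPolynomial σ ℤ}
    (hP : P.IsWeightedHomogeneous (fun s => p ^ l s) (p ^ n)) (hl : ∀ s ∈ P.vars, l s ≤ n)
    {u : σ → A} {M : ℝ≥0}
    (hu : ∀ s ∈ P.vars, α (u s) ^ p ^ n ≤ ((p : ℝ≥0) ^ l s * M) ^ p ^ l s) :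
    α (aeval u P) ≤ (p : ℝ≥0) ^ n * M := by
  rw [aeval_def, eval₂_eq]
  refine hα.map_sum_le _ _ fun d hd => ?_
  have hvars : ∀ s ∈ d.support, s ∈ P.vars := fun s hs =>
    (mem_vars_iff_mem_support s).mpr ⟨d, hd, hs⟩
  rw [hα.2.2.2]
  calc α (algebraMap ℤ A (P.coeff d)) * α (∏ s ∈ d.support, u s ^ d s)
      ≤ 1 * α (∏ s ∈ d.support, u s ^ d s) := by
        gcongr
        simpa using hα.map_intCast_le_one (P.coeff d)
    _ ≤ (p : ℝ≥0) ^ n * M := by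
        rw [one_mul]
        exact hα.map_prod_pow_le hp (hP (mem_support_iff.mp hd)) (fun s hs => hl s (hvars s hs))
          fun s hs => hu s (hvars s hs)

end IsMultSeminorm

lemma MvPolynomial.IsWeightedHomogeneous.of_C_mul {R σ M : Type*} [CommSemiring R]
    [NoZeroDivisors R] [AddCommMonoid M] {w : σ → M} {φ : MvPolynomial σ R} {m : M} {r : R}
    (hr : r ≠ 0) (h : (C r * φ).IsWeightedHomogeneous w m) : φ.IsWeightedHomogeneous w m :=
  fun d hd => h (by rw [coeff_C_mul]; exact mul_ne_zero hr hd)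

section WittStructure

variable (p : ℕ) {idx : Type*}

lemma isWeightedHomogeneous_rename_wittPolynomial (b : idx) (n : ℕ) :
    (rename (Prod.mk b) (wittPolynomial p ℤ n)).IsWeightedHomogeneous
      (fun s : idx × ℕ => p ^ s.2) (p ^ n) := by
  rw [wittPolynomial_eq_sum_C_mul_X_pow, map_sum]
  refine IsWeightedHomogeneous.sum _ _ _ fun i hi => ?_
  have hdeg : p ^ (n - i) * p ^ i = p ^ n := by
    rw [← pow_add, Nat.sub_add_cancel (Nat.lt_succ_iff.mp (Finset.mem_range.mp hi))]
  simpa [hdeg] using ((isWeightedHomogeneous_X ℤ (fun s : idx × ℕ => p ^ s.2) (b, i)).pow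
    (p ^ (n - i))).C_mul ((p : ℤ) ^ i)

variable [Fact p.Prime]

lemma isWeightedHomogeneous_wittStructureInt (Φ : MvPolynomial idx ℤ)
    (hΦ : ∀ n, (bind₁ (fun b => rename (Prod.mk b) (wittPolynomial p ℤ n)) Φ).IsWeightedHomogeneous
      (fun s : idx × ℕ => p ^ s.2) (p ^ n)) (n : ℕ) :
    (wittStructureInt p Φ n).IsWeightedHomogeneous (fun s : idx × ℕ => p ^ s.2) (p ^ n) := by
  induction n using Nat.strong_induction_on with
  | _ n ih =>
    have key := wittStructureInt_prop p Φ n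
    conv_lhs at key => rw [wittPolynomial_eq_sum_C_mul_X_pow, map_sum, Finset.sum_range_succ]
    simp only [map_mul, bind₁_C_right, map_pow, bind₁_X_right, Nat.sub_self, pow_zero,
      pow_one] at key
    refine IsWeightedHomogeneous.of_C_mul (r := (p : ℤ) ^ n)
      (pow_ne_zero n (Int.natCast_ne_zero.mpr (Fact.out : p.Prime).ne_zero)) ?_
    rw [map_pow, eq_sub_of_add_eq' key]
    refine (hΦ n).sub (IsWeightedHomogeneous.sum _ _ _ fun i hi => ?_)
    have hin := Finset.mem_range.mp hi
    have hdeg : p ^ (n - i) * p ^ i = p ^ n := by rw [← pow_add, Nat.sub_add_cancel hin.le]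
    simpa [hdeg] using ((ih i hin).pow (p ^ (n - i))).C_mul ((p : ℤ) ^ i)

lemma isWeightedHomogeneous_wittSub (n : ℕ) :
    (WittVector.wittSub p n).IsWeightedHomogeneous (fun s : Fin 2 × ℕ => p ^ s.2) (p ^ n) :=
  isWeightedHomogeneous_wittStructureInt p _ (fun n => by
    simpa using (isWeightedHomogeneous_rename_wittPolynomial p 0 n).sub
      (isWeightedHomogeneous_rename_wittPolynomial p 1 n)) n

end WittStructure

lemma WittVector.coeff_teichmuller_add_mul_p {p : ℕ} [Fact p.Prime] {R : Type*} [CommRing R]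
    [CharP R p] (a : R) (r : WittVector p R) (n : ℕ) :
    (teichmuller p a + r * (p : WittVector p R)).coeff n =
      (teichmuller p a).coeff n + (r * (p : WittVector p R)).coeff n :=
  coeff_add_of_disjoint n _ _ fun
    | 0 => .inr (mul_charP_coeff_zero r)
    | m + 1 => .inl (teichmuller_coeff_pos p a (m + 1) m.succ_pos)

lemma ExpChar.charP_of_prime {R : Type*} [AddMonoidWithOne R] {p : ℕ} [ExpChar R p]
    (hp : p.Prime) : CharP R p := by
  cases ‹ExpChar R p› with
  | zero => exact absurd hp Nat.not_prime_one
  | prime _ => assumption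

lemma NNReal.le_of_forall_le_max_pow {a b c : ℝ≥0} (hc : c < 1)
    (h : ∀ N : ℕ, a ≤ max b (c ^ N)) : a ≤ b := by
  by_contra! hba
  obtain ⟨N, hN⟩ := NNReal.exists_pow_lt_of_lt_one (zero_le.trans_lt hba) hc
  exact (h N).not_gt (max_lt hba hN)

lemma NNReal.inv_natCast_lt_one {n : ℕ} (hn : 1 < n) : (n : ℝ≥0)⁻¹ < 1 :=
  inv_lt_one_of_one_lt₀ (Nat.one_lt_cast.mpr hn)

lemma inv_natCast_pow_mul_le_one {A : Type*} {α : A → ℝ≥0} (hα1 : ∀ r, α r ≤ 1) (p i : ℕ)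
    (r : A) : (p : ℝ≥0)⁻¹ ^ i * α r ≤ 1 :=
  mul_le_one' (pow_le_one₀ zero_le (Nat.cast_inv_le_one p)) (hα1 r)

lemma trivialNorm_le_one {A : Type*} [CommRing A] (a : A) : trivialNorm a ≤ 1 := by
  unfold trivialNorm
  split <;> simp

section Perfect

open WittVector

variable {p : ℕ} [hp : Fact p.Prime] {R : Type*} [CommRing R] [ExpChar R p] [PerfectRing R p]

local notation "𝕎" => WittVector p

set_option synthInstance.checkSynthOrder false in
local instance {S : Type*} [CommRing S] [ExpChar S p] : CharP S p :=
  ExpChar.charP_of_prime hp.out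

lemma teichCoeff_zero (x : 𝕎 R) : teichCoeff p x 0 = x.coeff 0 := rfl

lemma teichCoeff_pow (x : 𝕎 R) (i : ℕ) : teichCoeff p x i ^ p ^ i = x.coeff i :=
  iterate_frobeniusEquiv_symm_pow_p_pow R p _ i

lemma teichCoeff_mul_zero (x y : 𝕎 R) :
    teichCoeff p (x * y) 0 = teichCoeff p x 0 * teichCoeff p y 0 :=
  mul_coeff_zero x y

lemma teichCoeff_teichmuller_add_mul_p_zero (a : R) (r : 𝕎 R) :
    teichCoeff p (teichmuller p a + r * (p : 𝕎 R)) 0 = a := by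
  rw [teichCoeff_zero, coeff_teichmuller_add_mul_p, mul_charP_coeff_zero, add_zero,
    teichmuller_coeff_zero]

lemma teichCoeff_teichmuller_add_mul_p_succ (a : R) (r : 𝕎 R) (m : ℕ) :
    teichCoeff p (teichmuller p a + r * (p : 𝕎 R)) (m + 1) = teichCoeff p r m := by
  rw [teichCoeff, coeff_teichmuller_add_mul_p, teichmuller_coeff_pos p a _ m.succ_pos, zero_add,
    mul_charP_coeff_succ, Function.iterate_succ_apply, ← frobenius_def,
    frobeniusEquiv_symm_apply_frobenius, teichCoeff]

lemma exists_eq_teichmuller_add_mul_p (x : 𝕎 R) :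
    ∃ (a : R) (r : 𝕎 R), x = teichmuller p a + r * (p : 𝕎 R) := by
  refine ⟨x.coeff 0, mk p fun m => (frobeniusEquiv R p).symm (x.coeff (m + 1)), ext fun n => ?_⟩
  rw [coeff_teichmuller_add_mul_p]
  cases n with
  | zero => rw [mul_charP_coeff_zero, add_zero, teichmuller_coeff_zero]
  | succ m => rw [mul_charP_coeff_succ, teichmuller_coeff_pos p _ _ m.succ_pos, zero_add,
      coeff_mk, frobeniusEquiv_symm_pow_p]

lemma teichCoeff_teichmuller_mul (a : R) (y : 𝕎 R) (n : ℕ) :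
    teichCoeff p (teichmuller p a * y) n = a * teichCoeff p y n := by
  induction n generalizing y with
  | zero => rw [teichCoeff_mul_zero, teichCoeff_zero, teichmuller_coeff_zero]
  | succ m ih =>
    obtain ⟨b, r, rfl⟩ := exists_eq_teichmuller_add_mul_p y
    have hy : teichmuller p a * (teichmuller p b + r * (p : 𝕎 R)) =
        teichmuller p (a * b) + (teichmuller p a * r) * (p : 𝕎 R) := by
      rw [map_mul]; ring
    rw [hy, teichCoeff_teichmuller_add_mul_p_succ, teichCoeff_teichmuller_add_mul_p_succ, ih]

lemma teichCoeff_sub (x y : 𝕎 R) (n : ℕ) :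
    teichCoeff p (x - y) n = aeval (fun s => (⇑(frobeniusEquiv R p).symm)^[n]
      (Function.uncurry ![x.coeff, y.coeff] s)) (wittSub p n) := by
  rw [teichCoeff, sub_coeff, peval, ← RingAut.coe_pow]
  exact comp_aeval_apply _ ((frobeniusEquiv R p).symm ^ n : R ≃+* R).toRingHom.toIntAlgHom _

variable {α : R → ℝ≥0}

lemma le_lambdaSeminorm (hα1 : ∀ r, α r ≤ 1) (x : 𝕎 R) (i : ℕ) :
    (p : ℝ≥0)⁻¹ ^ i * α (teichCoeff p x i) ≤ lambdaSeminorm p α x :=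
  le_ciSup (f := fun i => (p : ℝ≥0)⁻¹ ^ i * α (teichCoeff p x i))
    ⟨1, by rintro _ ⟨j, rfl⟩; exact inv_natCast_pow_mul_le_one hα1 p j _⟩ i

lemma apply_teichCoeff_le_of_lambdaSeminorm_le (hα1 : ∀ r, α r ≤ 1) {x : 𝕎 R} {M : ℝ≥0}
    (hx : lambdaSeminorm p α x ≤ M) (i : ℕ) : α (teichCoeff p x i) ≤ (p : ℝ≥0) ^ i * M := by
  rw [← inv_mul_le_iff₀ (pow_pos (Nat.cast_pos.mpr hp.out.pos) i), ← inv_pow]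
  exact (le_lambdaSeminorm hα1 x i).trans hx

lemma lambdaSeminorm_le_one (hα1 : ∀ r, α r ≤ 1) (x : 𝕎 R) : lambdaSeminorm p α x ≤ 1 :=
  ciSup_le fun i => inv_natCast_pow_mul_le_one hα1 p i _

lemma lambdaSeminorm_le_padicNormWitt (hαb : ∀ r, α r ≤ trivialNorm r) (x : 𝕎 R) :
    lambdaSeminorm p α x ≤ padicNormWitt p x :=
  ciSup_mono ⟨1, by rintro _ ⟨i, rfl⟩; exact inv_natCast_pow_mul_le_one trivialNorm_le_one p i _⟩
    fun i => by gcongr; exact hαb _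

lemma lambdaSeminorm_zero (hα : IsMultSeminorm α) : lambdaSeminorm p α (0 : 𝕎 R) = 0 := by
  simp [lambdaSeminorm, teichCoeff, hα.1]

lemma lambdaSeminorm_teichmuller_add_mul_p (hα1 : ∀ r, α r ≤ 1) (a : R) (r : 𝕎 R) :
    lambdaSeminorm p α (teichmuller p a + r * (p : 𝕎 R)) =
      max (α a) ((p : ℝ≥0)⁻¹ * lambdaSeminorm p α r) := by
  refine le_antisymm (ciSup_le fun i => ?_) (max_le ?_ ?_)
  · cases i with
    | zero => simp [teichCoeff_teichmuller_add_mul_p_zero]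
    | succ i =>
      rw [teichCoeff_teichmuller_add_mul_p_succ, pow_succ', mul_assoc]
      exact le_max_of_le_right (by gcongr; exact le_lambdaSeminorm hα1 r i)
  · simpa [teichCoeff_teichmuller_add_mul_p_zero] using
      le_lambdaSeminorm hα1 (teichmuller p a + r * (p : 𝕎 R)) 0
  · rw [lambdaSeminorm, NNReal.mul_iSup]
    refine ciSup_le fun i => ?_
    simpa [teichCoeff_teichmuller_add_mul_p_succ, pow_succ', mul_assoc] using
      le_lambdaSeminorm hα1 (teichmuller p a + r * (p : 𝕎 R)) (i + 1)

lemma lambdaSeminorm_teichmuller (hα : IsMultSeminorm α) (hα1 : ∀ r, α r ≤ 1) (a : R) :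
    lambdaSeminorm p α (teichmuller p a) = α a := by
  simpa [lambdaSeminorm_zero hα] using lambdaSeminorm_teichmuller_add_mul_p hα1 a (0 : 𝕎 R)

lemma lambdaSeminorm_one (hα : IsMultSeminorm α) (hα1 : ∀ r, α r ≤ 1) :
    lambdaSeminorm p α (1 : 𝕎 R) = 1 := by
  rw [← map_one (teichmuller p), lambdaSeminorm_teichmuller hα hα1, hα.2.2.1]

lemma lambdaSeminorm_mul_p (hα : IsMultSeminorm α) (hα1 : ∀ r, α r ≤ 1) (x : 𝕎 R) :
    lambdaSeminorm p α (x * (p : 𝕎 R)) = (p : ℝ≥0)⁻¹ * lambdaSeminorm p α x := by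
  simpa [teichmuller_zero, hα.1] using lambdaSeminorm_teichmuller_add_mul_p hα1 0 x

lemma lambdaSeminorm_teichmuller_mul (hα : IsMultSeminorm α) (a : R) (y : 𝕎 R) :
    lambdaSeminorm p α (teichmuller p a * y) = α a * lambdaSeminorm p α y := by
  simp only [lambdaSeminorm, teichCoeff_teichmuller_mul, hα.2.2.2, NNReal.mul_iSup, mul_left_comm]

lemma lambdaSeminorm_sub_le (hα : IsMultSeminorm α) (hα1 : ∀ r, α r ≤ 1) (x y : 𝕎 R) :
    lambdaSeminorm p α (x - y) ≤ max (lambdaSeminorm p α x) (lambdaSeminorm p α y) := by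
  refine ciSup_le fun n => ?_
  rw [inv_pow, inv_mul_le_iff₀ (pow_pos (Nat.cast_pos.mpr hp.out.pos) n), teichCoeff_sub]
  refine hα.map_aeval_le hp.out.pos (isWeightedHomogeneous_wittSub p n)
    (fun s hs => Finset.mem_range_succ_iff.mp (Finset.mem_product.mp (wittSub_vars p n hs)).2)
    fun ⟨b, i⟩ _ => ?_
  have hcoeff : Function.uncurry ![x.coeff, y.coeff] (b, i) =
      teichCoeff p (![x, y] b) i ^ p ^ i := by
    rw [teichCoeff_pow, v2_coeff]; rfl
  have hb : lambdaSeminorm p α (![x, y] b) ≤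
      max (lambdaSeminorm p α x) (lambdaSeminorm p α y) := by
    fin_cases b
    exacts [le_max_left _ _, le_max_right _ _]
  rw [← hα.map_pow, iterate_frobeniusEquiv_symm_pow_p_pow, hcoeff, hα.map_pow]
  exact pow_le_pow_left₀ zero_le (apply_teichCoeff_le_of_lambdaSeminorm_le hα1 hb i) _

lemma lambdaSeminorm_add_le (hα : IsMultSeminorm α) (hα1 : ∀ r, α r ≤ 1) (x y : 𝕎 R) :
    lambdaSeminorm p α (x + y) ≤ max (lambdaSeminorm p α x) (lambdaSeminorm p α y) :=
  apply_add_le_max_of_sub_le_max (lambdaSeminorm_zero hα) (lambdaSeminorm_sub_le hα hα1) x y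

lemma lambdaSeminorm_mul_le (hα : IsMultSeminorm α) (hα1 : ∀ r, α r ≤ 1) (x y : 𝕎 R) :
    lambdaSeminorm p α (x * y) ≤ lambdaSeminorm p α x * lambdaSeminorm p α y := by
  refine NNReal.le_of_forall_le_max_pow (NNReal.inv_natCast_lt_one hp.out.one_lt) fun N => ?_
  induction N generalizing x with
  | zero => exact le_max_of_le_right ((lambdaSeminorm_le_one hα1 _).trans_eq (pow_zero _).symm)
  | succ N ih =>
    obtain ⟨a, r, rfl⟩ := exists_eq_teichmuller_add_mul_p x
    have hxy : (teichmuller p a + r * (p : 𝕎 R)) * y =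
        teichmuller p a * y + r * y * (p : 𝕎 R) := by ring
    rw [hxy, lambdaSeminorm_teichmuller_add_mul_p hα1]
    calc _ ≤ max (lambdaSeminorm p α (teichmuller p a * y))
          (lambdaSeminorm p α (r * y * (p : 𝕎 R))) := lambdaSeminorm_add_le hα hα1 _ _
      _ = max (α a * lambdaSeminorm p α y) ((p : ℝ≥0)⁻¹ * lambdaSeminorm p α (r * y)) := by
          rw [lambdaSeminorm_teichmuller_mul hα, lambdaSeminorm_mul_p hα hα1]
      _ ≤ max (α a * lambdaSeminorm p α y) ((p : ℝ≥0)⁻¹ *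
          max (lambdaSeminorm p α r * lambdaSeminorm p α y) ((p : ℝ≥0)⁻¹ ^ N)) := by
          gcongr
          exact ih r
      _ = _ := by rw [mul_max, max_mul, pow_succ', max_assoc, mul_assoc]

lemma lambdaSeminorm_mul_lambdaSeminorm_le_max_of_lt (hα : IsMultSeminorm α)
    (hα1 : ∀ r, α r ≤ 1) {N : ℕ}
    (ih : ∀ x y : 𝕎 R, lambdaSeminorm p α x * lambdaSeminorm p α y ≤
      max (lambdaSeminorm p α (x * y)) ((p : ℝ≥0)⁻¹ ^ N))
    {x : 𝕎 R} (y : 𝕎 R) (hx : α (teichCoeff p x 0) < lambdaSeminorm p α x) :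
    lambdaSeminorm p α x * lambdaSeminorm p α y ≤
      max (lambdaSeminorm p α (x * y)) ((p : ℝ≥0)⁻¹ ^ (N + 1)) := by
  obtain ⟨a, r, rfl⟩ := exists_eq_teichmuller_add_mul_p x
  rw [teichCoeff_teichmuller_add_mul_p_zero, lambdaSeminorm_teichmuller_add_mul_p hα1] at hx
  have hxr : max (α a) ((p : ℝ≥0)⁻¹ * lambdaSeminorm p α r) =
      (p : ℝ≥0)⁻¹ * lambdaSeminorm p α r :=
    max_eq_right (lt_max_iff.mp hx |>.resolve_left (lt_irrefl _)).le
  rw [hxr] at hx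
  rw [lambdaSeminorm_teichmuller_add_mul_p hα1, hxr]
  rcases eq_zero_or_pos (lambdaSeminorm p α y) with hy | hy
  · simp [hy]
  have hhead : α a * lambdaSeminorm p α y <
      (p : ℝ≥0)⁻¹ * lambdaSeminorm p α r * lambdaSeminorm p α y :=
    mul_lt_mul_of_pos_right hx hy
  have htail : lambdaSeminorm p α (r * y * (p : 𝕎 R)) ≤
      max (lambdaSeminorm p α ((teichmuller p a + r * (p : 𝕎 R)) * y))
        (α a * lambdaSeminorm p α y) := by
    have hry : r * y * (p : 𝕎 R) =
        (teichmuller p a + r * (p : 𝕎 R)) * y - teichmuller p a * y := by ring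
    rw [hry, ← lambdaSeminorm_teichmuller_mul hα]
    exact lambdaSeminorm_sub_le hα hα1 _ _
  have hstep : (p : ℝ≥0)⁻¹ * lambdaSeminorm p α r * lambdaSeminorm p α y ≤
      max (lambdaSeminorm p α (r * y * (p : 𝕎 R))) ((p : ℝ≥0)⁻¹ ^ (N + 1)) := by
    rw [lambdaSeminorm_mul_p hα hα1, pow_succ', ← mul_max, mul_assoc]
    gcongr
    exact ih r y
  rcases le_max_iff.mp hstep with h | h
  · exact le_max_of_le_left ((le_max_iff.mp (h.trans htail)).resolve_right hhead.not_ge)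
  · exact le_max_of_le_right h

lemma le_lambdaSeminorm_mul (hα : IsMultSeminorm α) (hα1 : ∀ r, α r ≤ 1) (x y : 𝕎 R) :
    lambdaSeminorm p α x * lambdaSeminorm p α y ≤ lambdaSeminorm p α (x * y) := by
  refine NNReal.le_of_forall_le_max_pow (NNReal.inv_natCast_lt_one hp.out.one_lt) fun N => ?_
  induction N generalizing x y with
  | zero => exact le_max_of_le_right (by
      simpa using mul_le_one' (lambdaSeminorm_le_one hα1 x) (lambdaSeminorm_le_one hα1 y))
  | succ N ih =>
    by_cases hx : α (teichCoeff p x 0) < lambdaSeminorm p α x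
    · exact lambdaSeminorm_mul_lambdaSeminorm_le_max_of_lt hα hα1 ih y hx
    by_cases hy : α (teichCoeff p y 0) < lambdaSeminorm p α y
    · simpa only [mul_comm] using lambdaSeminorm_mul_lambdaSeminorm_le_max_of_lt hα hα1 ih x hy
    have hlead : ∀ z : 𝕎 R, ¬ α (teichCoeff p z 0) < lambdaSeminorm p α z →
        lambdaSeminorm p α z = α (teichCoeff p z 0) := fun z hz =>
      le_antisymm (not_lt.mp hz) (by simpa using le_lambdaSeminorm hα1 z 0)
    refine le_max_of_le_left ?_
    rw [hlead x hx, hlead y hy, ← hα.2.2.2, ← teichCoeff_mul_zero]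
    simpa using le_lambdaSeminorm hα1 (x * y) 0

lemma lambdaSeminorm_mul (hα : IsMultSeminorm α) (hα1 : ∀ r, α r ≤ 1) (x y : 𝕎 R) :
    lambdaSeminorm p α (x * y) = lambdaSeminorm p α x * lambdaSeminorm p α y :=
  le_antisymm (lambdaSeminorm_mul_le hα hα1 x y) (le_lambdaSeminorm_mul hα hα1 x y)

end Perfect

theorem lambdaSeminorm_isMultSeminorm (p : ℕ) [Fact p.Prime] {R : Type*}
    [CommRing R] [ExpChar R p] [PerfectRing R p]
    (α : R → ℝ≥0) (hα : IsMultSeminorm α) (hαb : ∀ r : R, α r ≤ trivialNorm r) :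
    IsMultSeminorm (lambdaSeminorm p α) ∧
      ∀ x : WittVector p R, lambdaSeminorm p α x ≤ padicNormWitt p x := by
  have hα1 : ∀ r, α r ≤ 1 := fun r => (hαb r).trans (trivialNorm_le_one r)
  exact ⟨⟨lambdaSeminorm_zero hα, lambdaSeminorm_sub_le hα hα1, lambdaSeminorm_one hα hα1,
    lambdaSeminorm_mul hα hα1⟩, lambdaSeminorm_le_padicNormWitt hαb⟩
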